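/- Let ∇ be a torsion-free affine connection on ℝⁿ given by smooth Christoffel symbols Γᵏᵢⱼ, let φᵢⱼ = φⱼᵢ : ℝⁿ → ℝ be smooth, and let g_{∇,φ} be the twisted Riemannian extension on ℝ²ⁿ. Then at every point of ℝ²ⁿ the Ricci operator of g_{∇,φ} (the endomorphism obtained by raising one index of the Ricci tensor with the metric) is nilpotent; consequently g_{∇,φ} is Einstein if and only if it is Ricci flat. -/

import Mathlib

open scoped BigOperators

noncomputable section

variable {ι : Type} [Fintype ι] [DecidableEq ι]

/-- Partial derivative in the `i`-th coordinate direction. -/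
def pd (i : ι) (f : (ι → ℝ) → ℝ) : (ι → ℝ) → ℝ :=
  fun p => fderiv ℝ f p (Pi.single i 1)

/-- Curvature components `R^l_{ijk}` of the torsion-free connection with Christoffel
symbols `Γ k i j = Γᵏᵢⱼ`:
`Rˡᵢⱼₖ = ∂ᵢΓˡⱼₖ − ∂ⱼΓˡᵢₖ + Σₘ (Γˡᵢₘ Γᵐⱼₖ − Γˡⱼₘ Γᵐᵢₖ)`. -/
def curv (Γ : ι → ι → ι → (ι → ℝ) → ℝ) (l i j k : ι) : (ι → ℝ) → ℝ :=
  fun p => pd i (Γ l j k) p - pd j (Γ l i k) p +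
    ∑ m, (Γ l i m p * Γ m j k p - Γ l j m p * Γ m i k p)

/-- Components `(∇ₕR)ˡᵢⱼₖ` of the covariant derivative of the curvature. -/
def covR (Γ : ι → ι → ι → (ι → ℝ) → ℝ) (h l i j k : ι) : (ι → ℝ) → ℝ :=
  fun p => pd h (curv Γ l i j k) p +
    ∑ m, (Γ l h m p * curv Γ m i j k p - Γ m h i p * curv Γ l m j k p
      - Γ m h j p * curv Γ l i m k p - Γ m h k p * curv Γ l i j m p)

/-- The Szabó operator `S(X) : Y ↦ (∇_X R)(Y,X)X` at the point `p`, as a matrix: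
`(S(X)Y)ˡ = Σ_{h,i,j,k} Xʰ Yⁱ Xʲ Xᵏ (∇ₕR)ˡᵢⱼₖ`. -/
def szabo (Γ : ι → ι → ι → (ι → ℝ) → ℝ) (p X : ι → ℝ) : Matrix ι ι ℝ :=
  Matrix.of fun l i => ∑ h, ∑ j, ∑ k, X h * X j * X k * covR Γ h l i j k p

/-- Ricci tensor `Ricⱼₖ = Σᵢ Rⁱᵢⱼₖ`. -/
def ricci (Γ : ι → ι → ι → (ι → ℝ) → ℝ) (j k : ι) : (ι → ℝ) → ℝ :=
  fun p => ∑ i, curv Γ i i j k p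

/-- Covariant derivative of the Ricci tensor,
`(∇ᵢRic)ⱼₖ = ∂ᵢRicⱼₖ − Σₘ (Γᵐᵢⱼ Ricₘₖ + Γᵐᵢₖ Ricⱼₘ)`. -/
def covRic (Γ : ι → ι → ι → (ι → ℝ) → ℝ) (i j k : ι) : (ι → ℝ) → ℝ :=
  fun p => pd i (ricci Γ j k) p -
    ∑ m, (Γ m i j p * ricci Γ m k p + Γ m i k p * ricci Γ j m p)

/-- The Ricci tensor is cyclic parallel at `p`. -/
def CyclicParallelAt (Γ : ι → ι → ι → (ι → ℝ) → ℝ) (p : ι → ℝ) : Prop :=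
  ∀ i j k, covRic Γ i j k p + covRic Γ j k i p + covRic Γ k i j p = 0

/-- Christoffel symbols `Γ̃ᶜₐᵦ = ½ Σ_d g̃ᶜᵈ (∂ₐ g̃ᵦ_d + ∂ᵦ g̃ₐ_d − ∂_d g̃ₐᵦ)` of the
Levi-Civita connection of a pseudo-Riemannian metric `g`. -/
def christoffel (g : (ι → ℝ) → Matrix ι ι ℝ) (c a b : ι) : (ι → ℝ) → ℝ :=
  fun p => (1 / 2) * ∑ d, (g p)⁻¹ c d *
    (pd a (fun q => g q b d) p + pd b (fun q => g q a d) p - pd d (fun q => g q a b) p)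

end

/-- The twisted Riemannian extension `g_{∇,φ}` on `ℝ²ⁿ = (Fin n ⊕ Fin n) → ℝ`:
`g_{ij} = φᵢⱼ − 2 Σₖ u_{k'} Γᵏᵢⱼ`, `g_{ij'} = g_{j'i} = δᵢⱼ`, `g_{i'j'} = 0`, where the base
coordinates are indexed by `Sum.inl` and the fiber coordinates by `Sum.inr`. -/
def gTwist {n : ℕ} (Γ : Fin n → Fin n → Fin n → (Fin n → ℝ) → ℝ)
    (φ : Fin n → Fin n → (Fin n → ℝ) → ℝ) :
    ((Fin n ⊕ Fin n) → ℝ) → Matrix (Fin n ⊕ Fin n) (Fin n ⊕ Fin n) ℝ :=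
  fun u => Matrix.of fun a b =>
    match a, b with
    | Sum.inl i, Sum.inl j =>
        φ i j (u ∘ Sum.inl) - 2 * ∑ k, u (Sum.inr k) * Γ k i j (u ∘ Sum.inl)
    | Sum.inl i, Sum.inr j => if i = j then 1 else 0
    | Sum.inr i, Sum.inl j => if i = j then 1 else 0
    | Sum.inr _, Sum.inr _ => 0

/-!
In the coordinates `(x, x')` the metric is `[[G, 1], [1, 0]]` with `G` affine in the fibre
coordinates, `∂_{h'} G_{ij} = -2Γʰᵢⱼ`, so `g⁻¹ = [[0, 1], [1, -G]]`. The Levi-Civita symbols are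
then `Γ̃ᵏᵢⱼ = Γᵏᵢⱼ`, `Γ̃^{k'}_{ij'} = -Γʲᵢₖ`, `Γ̃^{k'}_{i'j} = -Γⁱⱼₖ`, and zero when the upper index
is a base index and a lower one a fibre index, or when all three are fibre indices; apart from
`Γ̃^{k'}_{ij}`, none depends on the fibre coordinates. In every term of a Ricci component with a
fibre index some factor is therefore a vanishing symbol or a fibre derivative of a
fibre-independent one, so `Ric` lives on the base block. The Ricci operator `g⁻¹ Ric` then maps
the base into the fibre and kills the fibre, hence squares to zero. If `Ric = c g`, the Ricci
operator is `c • 1`, and nilpotency forces `c = 0`.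
-/

open Matrix

section PartialDerivative

variable {ι : Type} [Fintype ι] [DecidableEq ι]

theorem pd_eq_of_forall_add_smul {f : (ι → ℝ) → ℝ} {p : ι → ℝ} {i : ι} {c : ℝ}
    (hf : DifferentiableAt ℝ f p) (h : ∀ t : ℝ, f (p + t • Pi.single i 1) = f p + t * c) :
    pd i f p = c := by
  rw [pd, ← hf.lineDeriv_eq_fderiv, lineDeriv, funext h]
  simp

theorem pd_eq_zero_of_forall_add_smul {f : (ι → ℝ) → ℝ} {p : ι → ℝ} {i : ι}
    (h : ∀ t : ℝ, f (p + t • Pi.single i 1) = f p) : pd i f p = 0 := by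
  by_cases hf : DifferentiableAt ℝ f p
  · exact pd_eq_of_forall_add_smul hf (by simpa using h)
  · simp [pd, fderiv_zero_of_not_differentiableAt hf]

theorem pd_const (i : ι) (c : ℝ) (p : ι → ℝ) : pd i (fun _ => c) p = 0 :=
  pd_eq_zero_of_forall_add_smul fun _ => rfl

theorem pd_zero (i : ι) (p : ι → ℝ) : pd i 0 p = 0 :=
  pd_const i 0 p

theorem pd_inr_comp_inl {α β : Type} [Fintype α] [Fintype β] [DecidableEq α] [DecidableEq β]
    (f : (α → ℝ) → ℝ) (h : β) (u : α ⊕ β → ℝ) :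
    pd (Sum.inr h) (f ∘ (· ∘ Sum.inl)) u = 0 :=
  pd_eq_zero_of_forall_add_smul fun t => by
    change f ((u + t • Pi.single (Sum.inr h) 1) ∘ Sum.inl) = f (u ∘ Sum.inl)
    congr 1
    funext k
    simp

end PartialDerivative

section WalkerMetric

variable {α : Type} [Fintype α] [DecidableEq α]

theorem fromBlocks_mul_fromBlocks_neg {R : Type*} [CommRing R] (A : Matrix α α R) :
    fromBlocks A 1 1 0 * fromBlocks 0 1 1 (-A) = 1 := by
  simp [fromBlocks_multiply, ← fromBlocks_one]

theorem inv_fromBlocks_one_one_zero {R : Type*} [CommRing R] (A : Matrix α α R) :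
    (fromBlocks A 1 1 0)⁻¹ = fromBlocks 0 1 1 (-A) :=
  inv_eq_right_inv (fromBlocks_mul_fromBlocks_neg A)

variable {g : (α ⊕ α → ℝ) → Matrix (α ⊕ α) (α ⊕ α) ℝ} {G : (α ⊕ α → ℝ) → Matrix α α ℝ}

theorem pd_inr_left_of_eq_fromBlocks (hg : ∀ u, g u = fromBlocks (G u) 1 1 0)
    (d : α ⊕ α) (i : α) (b : α ⊕ α) (u : α ⊕ α → ℝ) :
    pd d (fun q => g q (Sum.inr i) b) u = 0 := by
  cases b <;> simp [hg, pd_const]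

theorem pd_inr_right_of_eq_fromBlocks (hg : ∀ u, g u = fromBlocks (G u) 1 1 0)
    (d : α ⊕ α) (a : α ⊕ α) (j : α) (u : α ⊕ α → ℝ) :
    pd d (fun q => g q a (Sum.inr j)) u = 0 := by
  cases a <;> simp [hg, pd_const]

theorem christoffel_inl_of_eq_fromBlocks (hg : ∀ u, g u = fromBlocks (G u) 1 1 0)
    (l : α) (a b : α ⊕ α) (u : α ⊕ α → ℝ) :
    christoffel g (Sum.inl l) a b u = -(1 / 2) * pd (Sum.inr l) (fun q => g q a b) u := by
  simp [christoffel, hg u, inv_fromBlocks_one_one_zero, Fintype.sum_sum_type, one_apply,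
    pd_inr_right_of_eq_fromBlocks hg]

theorem christoffel_inr_inr_right_of_eq_fromBlocks (hg : ∀ u, g u = fromBlocks (G u) 1 1 0)
    (l : α) (a : α ⊕ α) (j : α) (u : α ⊕ α → ℝ) :
    christoffel g (Sum.inr l) a (Sum.inr j) u =
      1 / 2 * pd (Sum.inr j) (fun q => g q a (Sum.inl l)) u := by
  simp [christoffel, hg u, inv_fromBlocks_one_one_zero, Fintype.sum_sum_type, one_apply,
    pd_inr_right_of_eq_fromBlocks hg, pd_inr_left_of_eq_fromBlocks hg]

theorem christoffel_inr_inr_left_of_eq_fromBlocks (hg : ∀ u, g u = fromBlocks (G u) 1 1 0)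
    (l i : α) (b : α ⊕ α) (u : α ⊕ α → ℝ) :
    christoffel g (Sum.inr l) (Sum.inr i) b u =
      1 / 2 * pd (Sum.inr i) (fun q => g q b (Sum.inl l)) u := by
  simp [christoffel, hg u, inv_fromBlocks_one_one_zero, Fintype.sum_sum_type, one_apply,
    pd_inr_right_of_eq_fromBlocks hg, pd_inr_left_of_eq_fromBlocks hg]

end WalkerMetric

section RicciOperator

variable {ι : Type} [Fintype ι] [DecidableEq ι]

noncomputable def ricciOperator (g : (ι → ℝ) → Matrix ι ι ℝ) (u : ι → ℝ) : Matrix ι ι ℝ :=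
  (g u)⁻¹ * of fun a b => ricci (christoffel g) a b u

theorem ricciOperator_eq_smul_one {g : (ι → ℝ) → Matrix ι ι ℝ} {u : ι → ℝ} {c : ℝ}
    (hg : IsUnit (g u).det) (hc : ∀ a b, ricci (christoffel g) a b u = c * g u a b) :
    ricciOperator g u = c • 1 := by
  have hRic : (of fun a b => ricci (christoffel g) a b u) = c • g u := by
    ext a b
    simp [hc]
  rw [ricciOperator, hRic, mul_smul_comm, nonsing_inv_mul _ hg]

theorem eq_zero_of_isNilpotent_smul_one {R : Type*} [CommRing R] [IsReduced R] [Nonempty ι]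
    {c : R} (h : IsNilpotent (c • (1 : Matrix ι ι R))) : c = 0 := by
  rw [smul_one_eq_diagonal, ← scalar_apply,
    IsNilpotent.map_iff fun _ _ => scalar_inj.mp] at h
  exact h.eq_zero

theorem isNilpotent_fromBlocks_zero_mul {m o R : Type*} [Fintype m] [Fintype o] [DecidableEq m]
    [DecidableEq o] [CommRing R]
    (B : Matrix m o R) (C : Matrix o m R) (D : Matrix o o R) (A : Matrix m m R) :
    IsNilpotent (fromBlocks 0 B C D * fromBlocks A 0 0 0) :=
  ⟨2, by simp [pow_two, fromBlocks_multiply]⟩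

end RicciOperator

section TwistedExtension

variable {n : ℕ} (Γ : Fin n → Fin n → Fin n → (Fin n → ℝ) → ℝ)
  (φ : Fin n → Fin n → (Fin n → ℝ) → ℝ)

theorem gTwist_eq_fromBlocks (u : Fin n ⊕ Fin n → ℝ) :
    gTwist Γ φ u = fromBlocks (gTwist Γ φ u).toBlocks₁₁ 1 1 0 := by
  ext (i | i) (j | j) <;> simp [gTwist, one_apply, toBlocks₁₁]

theorem isUnit_det_gTwist (u : Fin n ⊕ Fin n → ℝ) : IsUnit (gTwist Γ φ u).det := by
  rw [gTwist_eq_fromBlocks]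
  exact isUnit_det_of_right_inverse (fromBlocks_mul_fromBlocks_neg _)

theorem pd_inr_gTwist_inl_inl (hΓ : ∀ k i j, ContDiff ℝ (⊤ : ℕ∞) (Γ k i j))
    (hφ : ∀ i j, ContDiff ℝ (⊤ : ℕ∞) (φ i j)) (h i j : Fin n) (u : Fin n ⊕ Fin n → ℝ) :
    pd (Sum.inr h) (fun q => gTwist Γ φ q (Sum.inl i) (Sum.inl j)) u
      = -2 * Γ h i j (u ∘ Sum.inl) := by
  have hΓd := fun k => (hΓ k i j).differentiable (by simp)
  have hφd := (hφ i j).differentiable (by simp)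
  refine pd_eq_of_forall_add_smul (by simp only [gTwist, of_apply]; fun_prop) fun t => ?_
  have hbase : (u + t • Pi.single (Sum.inr h) 1) ∘ Sum.inl = u ∘ Sum.inl := by
    funext k; simp
  have hfibre : ∀ k, (u + t • Pi.single (Sum.inr h) 1 : Fin n ⊕ Fin n → ℝ) (Sum.inr k) =
      u (Sum.inr k) + if k = h then t else 0 := by
    intro k; simp [Pi.single_apply]
  simp only [gTwist, of_apply, hbase, hfibre, add_mul, ite_mul, zero_mul,
    Finset.sum_add_distrib, Finset.sum_ite_eq', Finset.mem_univ, if_true]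
  ring

theorem christoffel_gTwist_inl_inl_inl (hΓ : ∀ k i j, ContDiff ℝ (⊤ : ℕ∞) (Γ k i j))
    (hφ : ∀ i j, ContDiff ℝ (⊤ : ℕ∞) (φ i j)) (l i j : Fin n) :
    christoffel (gTwist Γ φ) (Sum.inl l) (Sum.inl i) (Sum.inl j) = Γ l i j ∘ (· ∘ Sum.inl) := by
  funext u
  rw [christoffel_inl_of_eq_fromBlocks (gTwist_eq_fromBlocks Γ φ),
    pd_inr_gTwist_inl_inl Γ φ hΓ hφ]
  simp

theorem christoffel_gTwist_inl_inr_right (l : Fin n) (a : Fin n ⊕ Fin n) (j : Fin n) :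
    christoffel (gTwist Γ φ) (Sum.inl l) a (Sum.inr j) = 0 := by
  funext u
  rw [christoffel_inl_of_eq_fromBlocks (gTwist_eq_fromBlocks Γ φ),
    pd_inr_right_of_eq_fromBlocks (gTwist_eq_fromBlocks Γ φ)]
  simp

theorem christoffel_gTwist_inl_inr_left (l i : Fin n) (b : Fin n ⊕ Fin n) :
    christoffel (gTwist Γ φ) (Sum.inl l) (Sum.inr i) b = 0 := by
  funext u
  rw [christoffel_inl_of_eq_fromBlocks (gTwist_eq_fromBlocks Γ φ),
    pd_inr_left_of_eq_fromBlocks (gTwist_eq_fromBlocks Γ φ)]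
  simp

theorem christoffel_gTwist_inr_inl_inr (hΓ : ∀ k i j, ContDiff ℝ (⊤ : ℕ∞) (Γ k i j))
    (hφ : ∀ i j, ContDiff ℝ (⊤ : ℕ∞) (φ i j)) (l i j : Fin n) :
    christoffel (gTwist Γ φ) (Sum.inr l) (Sum.inl i) (Sum.inr j) = (-Γ j i l) ∘ (· ∘ Sum.inl) := by
  funext u
  rw [christoffel_inr_inr_right_of_eq_fromBlocks (gTwist_eq_fromBlocks Γ φ),
    pd_inr_gTwist_inl_inl Γ φ hΓ hφ]
  simp

theorem christoffel_gTwist_inr_inr_inl (hΓ : ∀ k i j, ContDiff ℝ (⊤ : ℕ∞) (Γ k i j))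
    (hφ : ∀ i j, ContDiff ℝ (⊤ : ℕ∞) (φ i j)) (l i j : Fin n) :
    christoffel (gTwist Γ φ) (Sum.inr l) (Sum.inr i) (Sum.inl j) = (-Γ i j l) ∘ (· ∘ Sum.inl) := by
  funext u
  rw [christoffel_inr_inr_left_of_eq_fromBlocks (gTwist_eq_fromBlocks Γ φ),
    pd_inr_gTwist_inl_inl Γ φ hΓ hφ]
  simp

theorem christoffel_gTwist_inr_inr_inr (l i j : Fin n) :
    christoffel (gTwist Γ φ) (Sum.inr l) (Sum.inr i) (Sum.inr j) = 0 := by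
  funext u
  rw [christoffel_inr_inr_right_of_eq_fromBlocks (gTwist_eq_fromBlocks Γ φ),
    pd_inr_left_of_eq_fromBlocks (gTwist_eq_fromBlocks Γ φ)]
  simp

theorem ricci_gTwist_inr_left (hΓ : ∀ k i j, ContDiff ℝ (⊤ : ℕ∞) (Γ k i j))
    (hφ : ∀ i j, ContDiff ℝ (⊤ : ℕ∞) (φ i j)) (p : Fin n) (b : Fin n ⊕ Fin n)
    (u : Fin n ⊕ Fin n → ℝ) : ricci (christoffel (gTwist Γ φ)) (Sum.inr p) b u = 0 := by
  cases b <;> simp [ricci, curv, Fintype.sum_sum_type, christoffel_gTwist_inl_inl_inl Γ φ hΓ hφ,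
    christoffel_gTwist_inl_inr_right, christoffel_gTwist_inl_inr_left,
    christoffel_gTwist_inr_inl_inr Γ φ hΓ hφ, christoffel_gTwist_inr_inr_inl Γ φ hΓ hφ,
    christoffel_gTwist_inr_inr_inr, pd_zero, pd_inr_comp_inl]

theorem ricci_gTwist_inr_right (hΓ : ∀ k i j, ContDiff ℝ (⊤ : ℕ∞) (Γ k i j))
    (hφ : ∀ i j, ContDiff ℝ (⊤ : ℕ∞) (φ i j)) (a : Fin n ⊕ Fin n) (q : Fin n)
    (u : Fin n ⊕ Fin n → ℝ) : ricci (christoffel (gTwist Γ φ)) a (Sum.inr q) u = 0 := by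
  cases a <;> simp [ricci, curv, Fintype.sum_sum_type, christoffel_gTwist_inl_inr_right,
    christoffel_gTwist_inr_inl_inr Γ φ hΓ hφ, christoffel_gTwist_inr_inr_inr, pd_zero,
    pd_inr_comp_inl]

theorem isNilpotent_ricciOperator_gTwist (hΓ : ∀ k i j, ContDiff ℝ (⊤ : ℕ∞) (Γ k i j))
    (hφ : ∀ i j, ContDiff ℝ (⊤ : ℕ∞) (φ i j)) (u : Fin n ⊕ Fin n → ℝ) :
    IsNilpotent (ricciOperator (gTwist Γ φ) u) := by
  have hRic : (of fun a b => ricci (christoffel (gTwist Γ φ)) a b u)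
      = fromBlocks (of fun i j => ricci (christoffel (gTwist Γ φ)) (Sum.inl i) (Sum.inl j) u)
          0 0 0 := by
    ext (i | i) (j | j) <;>
      simp [ricci_gTwist_inr_left Γ φ hΓ hφ, ricci_gTwist_inr_right Γ φ hΓ hφ]
  rw [ricciOperator, gTwist_eq_fromBlocks Γ φ u, inv_fromBlocks_one_one_zero, hRic]
  exact isNilpotent_fromBlocks_zero_mul _ _ _ _

end TwistedExtension

theorem stmt_16_general (n : ℕ) (Γ : Fin n → Fin n → Fin n → (Fin n → ℝ) → ℝ)
    (hsmooth : ∀ k i j, ContDiff ℝ (⊤ : ℕ∞) (Γ k i j))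
    (φ : Fin n → Fin n → (Fin n → ℝ) → ℝ)
    (hφsmooth : ∀ i j, ContDiff ℝ (⊤ : ℕ∞) (φ i j)) :
    (∀ u : (Fin n ⊕ Fin n) → ℝ,
        IsNilpotent (Matrix.of fun a b =>
          ∑ d, (gTwist Γ φ u)⁻¹ a d * ricci (christoffel (gTwist Γ φ)) d b u)) ∧
      ((∃ c : ℝ, ∀ (u : (Fin n ⊕ Fin n) → ℝ) (a b : Fin n ⊕ Fin n),
          ricci (christoffel (gTwist Γ φ)) a b u = c * gTwist Γ φ u a b) ↔
        (∀ (u : (Fin n ⊕ Fin n) → ℝ) (a b : Fin n ⊕ Fin n),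
          ricci (christoffel (gTwist Γ φ)) a b u = 0)) := by
  have hnil : ∀ u, IsNilpotent (ricciOperator (gTwist Γ φ) u) :=
    isNilpotent_ricciOperator_gTwist Γ φ hsmooth hφsmooth
  refine ⟨hnil, fun ⟨c, hc⟩ u a b => ?_, fun h => ⟨0, fun u a b => by rw [h, zero_mul]⟩⟩
  have : Nonempty (Fin n ⊕ Fin n) := ⟨a⟩
  have hc0 : c = 0 := eq_zero_of_isNilpotent_smul_one <|
    ricciOperator_eq_smul_one (isUnit_det_gTwist Γ φ u) (hc u) ▸ hnil u
  rw [hc, hc0, zero_mul]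

/-- the Ricci operator of a twisted Riemannian extension `g_{∇,φ}` (obtained
by raising one index of the Ricci tensor of its Levi-Civita connection with the metric) is
nilpotent at every point; consequently `g_{∇,φ}` is Einstein (i.e. `Ric = c · g` for a
constant `c`) if and only if it is Ricci flat. -/
theorem stmt_16 (n : ℕ) (Γ : Fin n → Fin n → Fin n → (Fin n → ℝ) → ℝ)
    (hsmooth : ∀ k i j, ContDiff ℝ (⊤ : ℕ∞) (Γ k i j))
    (hsym : ∀ k i j, Γ k i j = Γ k j i)
    (φ : Fin n → Fin n → (Fin n → ℝ) → ℝ)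
    (hφsmooth : ∀ i j, ContDiff ℝ (⊤ : ℕ∞) (φ i j))
    (hφsym : ∀ i j, φ i j = φ j i) :
    (∀ u : (Fin n ⊕ Fin n) → ℝ,
        IsNilpotent (Matrix.of fun a b =>
          ∑ d, (gTwist Γ φ u)⁻¹ a d * ricci (christoffel (gTwist Γ φ)) d b u)) ∧
      ((∃ c : ℝ, ∀ (u : (Fin n ⊕ Fin n) → ℝ) (a b : Fin n ⊕ Fin n),
          ricci (christoffel (gTwist Γ φ)) a b u = c * gTwist Γ φ u a b) ↔
        (∀ (u : (Fin n ⊕ Fin n) → ℝ) (a b : Fin n ⊕ Fin n),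
          ricci (christoffel (gTwist Γ φ)) a b u = 0)) :=
  stmt_16_general n Γ hsmooth φ hφsmooth
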